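/- arXiv:1610.00853 — 2 statements merged into one kernel-verified Lean document; each statement's English description precedes it below -/
import Mathlib

section
/- Let G be a connected (2K_2, C_3, C_5)-free graph (a connected finite simple graph with no induced 2K_2, no induced C_3 and no induced C_5), let S be a minimal vertex separator of G, and let G_1 be a non-trivial connected component of G − S. Then for every edge {u, v} of G with u, v ∈ V(G_1), one endpoint is universal to S and the other endpoint has no neighbor in S; that is, after possibly swapping u and v, S ⊆ N_G(u) and N_G(v) ∩ S = ∅. -/
variable {V : Type*}

/-- The graph `G − S`: delete the vertices of `S` (they become isolated). -/
def SimpleGraph.removeVerts (G : SimpleGraph V) (S : Set V) : SimpleGraph V where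
  Adj u v := G.Adj u v ∧ u ∉ S ∧ v ∉ S
  symm := ⟨fun u v ⟨h, hu, hv⟩ => ⟨h.symm, hv, hu⟩⟩
  loopless := ⟨fun u ⟨h, _, _⟩ => G.loopless.irrefl u h⟩

/-- `S` is a minimal vertex separator of `G`: some `a, b ∉ S` lie in different
connected components of `G − S`, while for every proper subset `S' ⊊ S` they lie
in the same connected component of `G − S'`. -/
def SimpleGraph.IsMinSep (G : SimpleGraph V) (S : Set V) : Prop :=
  ∃ a b : V, a ∉ S ∧ b ∉ S ∧ ¬ (G.removeVerts S).Reachable a b ∧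
    ∀ S' : Set V, S' ⊂ S → (G.removeVerts S').Reachable a b

/-- `C` is (the vertex set of) a connected component of `G − S`. -/
def SimpleGraph.IsCompOf (G : SimpleGraph V) (S : Set V) (C : Set V) : Prop :=
  ∃ u : V, u ∉ S ∧ C = {v : V | (G.removeVerts S).Reachable u v ∧ v ∉ S}

/-- `G` has no induced `2K₂`. -/
def SimpleGraph.TwoK2Free (G : SimpleGraph V) : Prop :=
  ¬ ∃ a b c d : V, a ≠ b ∧ a ≠ c ∧ a ≠ d ∧ b ≠ c ∧ b ≠ d ∧ c ≠ d ∧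
    G.Adj a b ∧ G.Adj c d ∧ ¬ G.Adj a c ∧ ¬ G.Adj a d ∧ ¬ G.Adj b c ∧ ¬ G.Adj b d

/-- `G` has an induced cycle on `k` vertices, all of them lying in `A`. -/
def SimpleGraph.HasInducedCycleOn (G : SimpleGraph V) (A : Set V) (k : ℕ) [NeZero k] : Prop :=
  ∃ f : Fin k → V, Function.Injective f ∧ (∀ i, f i ∈ A) ∧
    ∀ i j : Fin k, G.Adj (f i) (f j) ↔ (j = i + 1 ∨ i = j + 1)

/-- `G` has no induced cycle on `k` vertices. -/
def SimpleGraph.CkFree (G : SimpleGraph V) (k : ℕ) [NeZero k] : Prop :=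
  ¬ G.HasInducedCycleOn Set.univ k

/-- `F` is a feedback vertex set of `G`: `G − F` contains no cycle. -/
def SimpleGraph.IsFVS (G : SimpleGraph V) (F : Set V) : Prop :=
  (G.removeVerts F).IsAcyclic

/-- The minimum cardinality of a feedback vertex set of `G`. -/
noncomputable def SimpleGraph.minFVS (G : SimpleGraph V) : ℕ :=
  sInf {n : ℕ | ∃ F : Set V, G.IsFVS F ∧ F.ncard = n}


/-!
Two edges in different components of `G − S` would form an induced `2K₂`, so every component
of `G − S` other than the one containing `uv` is a single vertex. A minimal separator has a full
component (every vertex of `S` has a neighbour in it) not containing `uv`; it is therefore a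
single vertex `w` adjacent to all of `S`, and `w` is adjacent to neither `u` nor `v`. For `s ∈ S`,
triangle-freeness forbids `s` to see both `u` and `v`, and the pair of edges `uv`, `sw` forbids
it to see neither. Finally, if `s ~ u` and `t ~ v` for `s, t ∈ S`, then `s t w` is a triangle or
`u s w t v` an induced `C₅`.
-/

namespace SimpleGraph

variable {G : SimpleGraph V} {S : Set V} {u v w : V}

/-- `hk` says that distinct vertices of `C_k` have distinct neighbourhoods (true unless `k = 4`);
it makes `f` injective. -/
lemma hasInducedCycleOn_univ_of_adj_iff {k : ℕ} [NeZero k]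
    (hk : ∀ i j : Fin k, (∀ l, (l = i + 1 ∨ i = l + 1) ↔ (l = j + 1 ∨ j = l + 1)) → i = j)
    {f : Fin k → V} (hf : ∀ i j, G.Adj (f i) (f j) ↔ (j = i + 1 ∨ i = j + 1)) :
    G.HasInducedCycleOn Set.univ k :=
  ⟨f, fun i j hij => hk i j fun l => by rw [← hf, ← hf, hij], fun _ => trivial, hf⟩

lemma CkFree.not_triangle (h3 : G.CkFree 3) {x y z : V} (hxy : G.Adj x y) (hyz : G.Adj y z) :
    ¬G.Adj x z := by
  intro hxz
  refine h3 (hasInducedCycleOn_univ_of_adj_iff (f := ![x, y, z]) (by decide) ?_)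
  intro i j
  fin_cases i <;> fin_cases j <;> simp [hxy, hyz, hxz, hxy.symm, hyz.symm, hxz.symm]

lemma CkFree.not_induced_pentagon (h5 : G.CkFree 5) {a b c d e : V}
    (hab : G.Adj a b) (hbc : G.Adj b c) (hcd : G.Adj c d) (hde : G.Adj d e) (hea : G.Adj e a)
    (hac : ¬G.Adj a c) (had : ¬G.Adj a d) (hbd : ¬G.Adj b d) (hbe : ¬G.Adj b e)
    (hce : ¬G.Adj c e) : False := by
  refine h5 (hasInducedCycleOn_univ_of_adj_iff (f := ![a, b, c, d, e]) (by decide) ?_)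
  intro i j
  fin_cases i <;> fin_cases j <;>
    simp [hab, hbc, hcd, hde, hea, hab.symm, hbc.symm, hcd.symm, hde.symm, hea.symm, hac, had,
      hbd, hbe, hce, mt G.adj_symm hac, mt G.adj_symm had, mt G.adj_symm hbd,
      mt G.adj_symm hbe, mt G.adj_symm hce]

lemma TwoK2Free.adj_or_adj {a b c d : V} (h : G.TwoK2Free) (hab : G.Adj a b) (hcd : G.Adj c d)
    (hac : a ≠ c) (had : a ≠ d) (hbc : b ≠ c) (hbd : b ≠ d) :
    G.Adj a c ∨ G.Adj a d ∨ G.Adj b c ∨ G.Adj b d := by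
  by_contra! ⟨hac', had', hbc', hbd'⟩
  exact h ⟨a, b, c, d, hab.ne, hac, had, hbc, hbd, hcd.ne, hab, hcd, hac', had', hbc', hbd'⟩

lemma Adj.reachable_removeVerts (h : G.Adj u v) (hu : u ∉ S) (hv : v ∉ S) :
    (G.removeVerts S).Reachable u v :=
  Adj.reachable ⟨h, hu, hv⟩

lemma not_adj_of_not_reachable_removeVerts (hu : u ∉ S) (hv : v ∉ S)
    (h : ¬(G.removeVerts S).Reachable u v) : ¬G.Adj u v :=
  fun huv => h (huv.reachable_removeVerts hu hv)

lemma exists_adj_reachable_of_reachable_removeVerts_diff {a b s : V} (ha : a ∉ S)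
    (hab : ¬(G.removeVerts S).Reachable a b) (h : (G.removeVerts (S \ {s})).Reachable a b) :
    ∃ p ∉ S, G.Adj s p ∧ (G.removeVerts S).Reachable a p := by
  obtain ⟨W⟩ := h
  -- the first step of `W` that leaves the component of `a` in `G − S` must enter `s`
  induction W with
  | nil => exact absurd .rfl hab
  | @cons a c b hac W ih =>
    obtain ⟨hac, -, hc⟩ := hac
    by_cases hcs : c = s
    · subst hcs
      exact ⟨a, ha, hac.symm, .rfl⟩
    have hcS : c ∉ S := fun h => hc ⟨h, hcs⟩
    have hreach := hac.reachable_removeVerts ha hcS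
    obtain ⟨p, hpS, hsp, hcp⟩ := ih hcS fun hcb => hab (hreach.trans hcb)
    exact ⟨p, hpS, hsp, hreach.trans hcp⟩

lemma IsMinSep.exists_full_not_reachable (hS : G.IsMinSep S) (x : V) :
    ∃ w ∉ S, ¬(G.removeVerts S).Reachable x w ∧
      ∀ s ∈ S, ∃ p ∉ S, G.Adj s p ∧ (G.removeVerts S).Reachable w p := by
  obtain ⟨a, b, ha, hb, hab, hmin⟩ := hS
  have hdiff {s : V} (hs : s ∈ S) : S \ {s} ⊂ S :=
    Set.sdiff_singleton_ssubset.mpr hs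
  by_cases hxa : (G.removeVerts S).Reachable x a
  · exact ⟨b, hb, fun hxb => hab (hxa.symm.trans hxb), fun s hs =>
      exists_adj_reachable_of_reachable_removeVerts_diff hb (mt .symm hab) (hmin _ (hdiff hs)).symm⟩
  · exact ⟨a, ha, hxa, fun s hs =>
      exists_adj_reachable_of_reachable_removeVerts_diff ha hab (hmin _ (hdiff hs))⟩

lemma TwoK2Free.reachable_removeVerts_of_adj (h : G.TwoK2Free) {x y : V}
    (huv : (G.removeVerts S).Adj u v) (hxy : (G.removeVerts S).Adj x y) :
    (G.removeVerts S).Reachable u x := by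
  by_contra hux
  have hfar {p q : V} (hp : (G.removeVerts S).Reachable u p)
      (hq : (G.removeVerts S).Reachable x q) : ¬(G.removeVerts S).Reachable p q :=
    fun hpq => hux (hp.trans (hpq.trans hq.symm))
  have hne {p q : V} (hp : (G.removeVerts S).Reachable u p)
      (hq : (G.removeVerts S).Reachable x q) : p ≠ q :=
    fun hpq => hfar hp hq (hpq ▸ .rfl)
  have huv' := huv.reachable
  have hxy' := hxy.reachable
  obtain ⟨huv, hu, hv⟩ := huv
  obtain ⟨hxy, hx, hy⟩ := hxy
  rcases h.adj_or_adj huv hxy (hne .rfl .rfl) (hne .rfl hxy') (hne huv' .rfl) (hne huv' hxy')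
    with h | h | h | h
  · exact hfar .rfl .rfl (h.reachable_removeVerts hu hx)
  · exact hfar .rfl hxy' (h.reachable_removeVerts hu hy)
  · exact hfar huv' .rfl (h.reachable_removeVerts hv hx)
  · exact hfar huv' hxy' (h.reachable_removeVerts hv hy)

lemma IsMinSep.exists_universal_not_reachable (hS : G.IsMinSep S) (h2k2 : G.TwoK2Free)
    (huv : (G.removeVerts S).Adj u v) :
    ∃ w ∉ S, ¬(G.removeVerts S).Reachable u w ∧ S ⊆ G.neighborSet w := by
  obtain ⟨w, hwS, huw, hfull⟩ := hS.exists_full_not_reachable u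
  refine ⟨w, hwS, huw, fun s hs => ?_⟩
  obtain ⟨p, -, hsp, ⟨W⟩⟩ := hfull s hs
  cases W with
  | nil => exact hsp.symm
  | cons hwp _ => exact absurd (h2k2.reachable_removeVerts_of_adj huv hwp) huw

lemma TwoK2Free.adj_iff_not_adj_of_adj (h2k2 : G.TwoK2Free) (hc3 : G.CkFree 3) (huv : G.Adj u v)
    (hwu : w ≠ u) (hwv : w ≠ v) (huw : ¬G.Adj u w) (hvw : ¬G.Adj v w) {t : V} (hwt : G.Adj w t) :
    G.Adj u t ↔ ¬G.Adj v t := by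
  refine ⟨fun hut => hc3.not_triangle huv.symm hut, fun hvt => ?_⟩
  by_contra hut
  have hne {x : V} (hxw : ¬G.Adj x w) : x ≠ t := fun hxt => hxw (hxt ▸ hwt.symm)
  rcases h2k2.adj_or_adj huv hwt.symm (hne huw) hwu.symm (hne hvw) hwv.symm with h | h | h | h
  exacts [hut h, huw h, hvt h, hvw h]

lemma CkFree.not_adj_and_adj_of_induced_path (hc3 : G.CkFree 3) (hc5 : G.CkFree 5) {s t : V}
    (hsu : G.Adj s u) (huv : G.Adj u v) (hvt : G.Adj v t) (hsv : ¬G.Adj s v) (hut : ¬G.Adj u t)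
    (huw : ¬G.Adj u w) (hvw : ¬G.Adj v w) : ¬(G.Adj w s ∧ G.Adj w t) := by
  rintro ⟨hws, hwt⟩
  by_cases hst : G.Adj s t
  · exact hc3.not_triangle hst hwt.symm hws.symm
  · exact hc5.not_induced_pentagon hsu.symm hws.symm hwt hvt.symm huv.symm huw hut hst hsv
      (mt G.adj_symm hvw)

theorem TwoK2Free.subset_neighborSet_or_subset_neighborSet (h2k2 : G.TwoK2Free)
    (hc3 : G.CkFree 3) (hc5 : G.CkFree 5) (huv : G.Adj u v) (hwu : w ≠ u) (hwv : w ≠ v)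
    (huw : ¬G.Adj u w) (hvw : ¬G.Adj v w) {T : Set V} (hT : T ⊆ G.neighborSet w) :
    (T ⊆ G.neighborSet u ∧ G.neighborSet v ∩ T = ∅) ∨
      (T ⊆ G.neighborSet v ∧ G.neighborSet u ∩ T = ∅) := by
  have hiff {t : V} (ht : t ∈ T) := h2k2.adj_iff_not_adj_of_adj hc3 huv hwu hwv huw hvw (hT ht)
  have hside : (∀ s ∈ T, G.Adj u s) ∨ ∀ t ∈ T, G.Adj v t := by
    by_contra! ⟨⟨t, ht, hut⟩, ⟨s, hs, hvs⟩⟩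
    exact hc3.not_adj_and_adj_of_induced_path hc5 ((hiff hs).2 hvs).symm huv
      ((iff_not_comm.1 (hiff ht)).2 hut) (mt G.adj_symm hvs) hut huw hvw ⟨hT hs, hT ht⟩
  rcases hside with hu | hv
  · exact .inl ⟨hu, Set.eq_empty_of_forall_notMem fun t ⟨hvt, ht⟩ => (hiff ht).1 (hu t ht) hvt⟩
  · exact .inr ⟨hv, Set.eq_empty_of_forall_notMem fun t ⟨hut, ht⟩ => (hiff ht).1 hut (hv t ht)⟩

end SimpleGraph

theorem stmt6_general (G : SimpleGraph V) (S C : Set V)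
    (h2k2 : G.TwoK2Free) (hc3 : G.CkFree 3) (hc5 : G.CkFree 5)
    (hS : G.IsMinSep S) (hC : G.IsCompOf S C) :
    ∀ u ∈ C, ∀ v ∈ C, G.Adj u v →
      (S ⊆ G.neighborSet u ∧ G.neighborSet v ∩ S = ∅) ∨
      (S ⊆ G.neighborSet v ∧ G.neighborSet u ∩ S = ∅) := by
  obtain ⟨u₀, -, rfl⟩ := hC
  rintro u ⟨-, hu⟩ v ⟨-, hv⟩ huv
  have huv' : (G.removeVerts S).Adj u v := ⟨huv, hu, hv⟩
  obtain ⟨w, hw, huw, hSw⟩ := hS.exists_universal_not_reachable h2k2 huv'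
  have hvw : ¬(G.removeVerts S).Reachable v w := fun h => huw (huv'.reachable.trans h)
  exact h2k2.subset_neighborSet_or_subset_neighborSet hc3 hc5 huv
    (fun h => huw (h ▸ .rfl)) (fun h => hvw (h ▸ .rfl))
    (SimpleGraph.not_adj_of_not_reachable_removeVerts hu hw huw)
    (SimpleGraph.not_adj_of_not_reachable_removeVerts hv hw hvw) hSw

theorem stmt6 [Fintype V] (G : SimpleGraph V) (S C : Set V)
    (hconn : G.Connected) (h2k2 : G.TwoK2Free) (hc3 : G.CkFree 3) (hc5 : G.CkFree 5)
    (hS : G.IsMinSep S) (hC : G.IsCompOf S C) (hnt : ¬ ∃ v, C = {v}) :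
    ∀ u ∈ C, ∀ v ∈ C, G.Adj u v →
      (S ⊆ G.neighborSet u ∧ G.neighborSet v ∩ S = ∅) ∨
      (S ⊆ G.neighborSet v ∧ G.neighborSet u ∩ S = ∅) :=
  stmt6_general G S C h2k2 hc3 hc5 hS hC
end

section
/- Let G be a connected (2K_2, C_3, C_5)-free graph (a connected finite simple graph with no induced 2K_2, no induced C_3 and no induced C_5), let S be a minimal vertex separator of G, and let G_1 be a non-trivial connected component of G − S. Let U be the set of vertices of G_1 that are universal to S and U' = V(G_1) \ U. Then there exists a vertex u ∈ U that is adjacent in G to every vertex of U'. -/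
variable {V : Type*}

/-!
Every vertex `s` of the separator has a neighbour `z` in a second component `D`. For an edge `xy`
of `C`, triangle-freeness and the absence of a `2K₂` on `xy, sz` force `s` to be adjacent to exactly
one of `x, y`. Two vertices of `S` splitting an edge of `C` in opposite ways yield a triangle, a
`2K₂` with an edge of `D`, or an induced `C₅`; hence all of `S` has the same neighbours in `C`, and
`U`, `C \ U` are independent sets, each vertex of `C \ U` having a neighbour in `U`. In a
`2K₂`-free graph the neighbourhoods of the vertices of `U` are totally ordered by inclusion, and a
vertex of `U` with the largest one is the required vertex.
-/

namespace SimpleGraph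

variable {G : SimpleGraph V} {S C D : Set V} {a b c d e s s₀ s₁ v w x y z : V}

theorem CkFree.not_adj_of_adj_of_adj (h3 : G.CkFree 3) (hab : G.Adj a b) (hbc : G.Adj b c) :
    ¬G.Adj a c := by
  intro hac
  refine h3 ⟨![a, b, c], ?_, fun _ => Set.mem_univ _, ?_⟩
  · intro i j
    fin_cases i <;> fin_cases j <;> simp_all [hab.ne, hbc.ne, hac.ne, hab.ne', hbc.ne', hac.ne']
  · intro i j
    fin_cases i <;> fin_cases j <;> simp [hab, hbc, hac, hab.symm, hbc.symm, hac.symm]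

theorem CkFree.not_adj_of_induced_path (h5 : G.CkFree 5)
    (hab : G.Adj a b) (hbc : G.Adj b c) (hcd : G.Adj c d) (hde : G.Adj d e)
    (hac : ¬G.Adj a c) (had : ¬G.Adj a d) (hbd : ¬G.Adj b d) (hbe : ¬G.Adj b e)
    (hce : ¬G.Adj c e) : ¬G.Adj e a := by
  intro hea
  have nac : a ≠ c := by rintro rfl; exact had hcd
  have nad : a ≠ d := by rintro rfl; exact hac hcd.symm
  have nbd : b ≠ d := by rintro rfl; exact hbe hde
  have nbe : b ≠ e := by rintro rfl; exact hbd hde.symm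
  have nce : c ≠ e := by rintro rfl; exact hac hea.symm
  refine h5 ⟨![a, b, c, d, e], ?_, fun _ => Set.mem_univ _, ?_⟩
  · intro i j
    fin_cases i <;> fin_cases j <;>
      simp_all [hab.ne, hbc.ne, hcd.ne, hde.ne, hea.ne, hab.ne', hbc.ne', hcd.ne', hde.ne',
        hea.ne', nac.symm, nad.symm, nbd.symm, nbe.symm, nce.symm]
  · intro i j
    fin_cases i <;> fin_cases j <;>
      simp [hab, hbc, hcd, hde, hea, hab.symm, hbc.symm, hcd.symm, hde.symm, hea.symm,
        hac, had, hbd, hbe, hce, G.adj_comm c a, G.adj_comm d a, G.adj_comm d b,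
        G.adj_comm e b, G.adj_comm e c]

/-- The four vertices are automatically distinct, as `a, b` and `c, d` are joined by edges but
not to each other. -/
theorem TwoK2Free.adj_of_adj_of_adj (h2 : G.TwoK2Free) (hab : G.Adj a b) (hcd : G.Adj c d)
    (hac : ¬G.Adj a c) (had : ¬G.Adj a d) (hbc : ¬G.Adj b c) : G.Adj b d := by
  by_contra hbd
  refine h2 ⟨a, b, c, d, hab.ne, ?_, ?_, ?_, ?_, hcd.ne, hab, hcd, hac, had, hbc, hbd⟩
  · rintro rfl; exact had hcd
  · rintro rfl; exact hac hcd.symm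
  · rintro rfl; exact hbd hcd
  · rintro rfl; exact hbc hcd.symm

theorem adj_iff_not_adj_of_adj (h2 : G.TwoK2Free) (h3 : G.CkFree 3) (hsz : G.Adj s z)
    (hxy : G.Adj x y) (hxz : ¬G.Adj x z) (hyz : ¬G.Adj y z) : G.Adj s x ↔ ¬G.Adj s y := by
  refine ⟨fun hsx => h3.not_adj_of_adj_of_adj hsx hxy, fun hsy => ?_⟩
  by_contra hsx
  exact hyz (h2.adj_of_adj_of_adj hxy hsz (fun h => hsx h.symm) hxz (fun h => hsy h.symm))

theorem TwoK2Free.neighborSet_inter_subset_or {A B : Set V} (h2 : G.TwoK2Free)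
    (hA : G.IsIndepSet A) (hB : G.IsIndepSet B) (ha : a ∈ A) (hb : b ∈ A) :
    G.neighborSet a ∩ B ⊆ G.neighborSet b ∩ B ∨ G.neighborSet b ∩ B ⊆ G.neighborSet a ∩ B := by
  by_contra! ⟨hab, hba⟩
  obtain ⟨y, ⟨hay, hyB⟩, hby⟩ := Set.not_subset.mp hab
  obtain ⟨w, ⟨hbw, hwB⟩, haw⟩ := Set.not_subset.mp hba
  have hne : a ≠ b := by rintro rfl; exact hby ⟨hay, hyB⟩
  have hyw : y ≠ w := by rintro rfl; exact haw ⟨hay, hyB⟩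
  exact hB hyB hwB hyw <| h2.adj_of_adj_of_adj hay hbw (hA ha hb hne)
    (fun h => haw ⟨h, hwB⟩) (fun h => hby ⟨h.symm, hyB⟩)

/-- By `neighborSet_inter_subset_or` a vertex of `A` with a maximal neighbourhood in `B` sees
every vertex of `B` seen from `A`. -/
theorem TwoK2Free.exists_forall_adj {A B : Set V} (h2 : G.TwoK2Free) (hAfin : A.Finite)
    (hAne : A.Nonempty) (hA : G.IsIndepSet A) (hB : G.IsIndepSet B)
    (hBA : ∀ w ∈ B, ∃ a ∈ A, G.Adj a w) : ∃ u ∈ A, ∀ w ∈ B, G.Adj u w := by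
  obtain ⟨u, hu, hmax⟩ := hAfin.exists_maximalFor (fun a => G.neighborSet a ∩ B) A hAne
  refine ⟨u, hu, fun w hw => ?_⟩
  obtain ⟨a, ha, haw⟩ := hBA w hw
  rcases h2.neighborSet_inter_subset_or hA hB hu ha with hua | hau
  · exact (hmax ha hua ⟨haw, hw⟩).1
  · exact (hau ⟨haw, hw⟩).1

theorem reachable_or_exists_adj (hx : x ∉ S) (hxy : (G.removeVerts (S \ {s})).Reachable x y) :
    (G.removeVerts S).Reachable x y ∨
      ∃ p, G.Adj s p ∧ p ∉ S ∧ (G.removeVerts S).Reachable x p := by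
  obtain ⟨w⟩ := hxy
  induction w with
  | nil => exact Or.inl .rfl
  | @cons u v _ huv _ ih =>
    by_cases hv : v = s
    · exact Or.inr ⟨u, hv ▸ huv.1.symm, hx, .rfl⟩
    have hvS : v ∉ S := fun hvS => huv.2.2 ⟨hvS, hv⟩
    have huv' : (G.removeVerts S).Adj u v := ⟨huv.1, hx, hvS⟩
    rcases ih hvS with h | ⟨p, hsp, hp, hvp⟩
    · exact Or.inl (huv'.reachable.trans h)
    · exact Or.inr ⟨p, hsp, hp, huv'.reachable.trans hvp⟩

namespace IsCompOf

theorem nonempty (hC : G.IsCompOf S C) : C.Nonempty :=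
  let ⟨u, hu, hC⟩ := hC
  ⟨u, hC ▸ ⟨.rfl, hu⟩⟩

theorem notMem_of_mem (hC : G.IsCompOf S C) (hv : v ∈ C) : v ∉ S := by
  obtain ⟨u, -, rfl⟩ := hC
  exact hv.2

theorem reachable (hC : G.IsCompOf S C) (hv : v ∈ C) (hw : w ∈ C) :
    (G.removeVerts S).Reachable v w := by
  obtain ⟨u, -, rfl⟩ := hC
  exact hv.1.symm.trans hw.1

theorem mem_of_reachable (hC : G.IsCompOf S C) (hv : v ∈ C)
    (hvw : (G.removeVerts S).Reachable v w) (hw : w ∉ S) : w ∈ C := by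
  obtain ⟨u, -, rfl⟩ := hC
  exact ⟨hv.1.trans hvw, hw⟩

theorem exists_adj_mem (hC : G.IsCompOf S C) (hnt : ¬∃ u, C = {u}) (hv : v ∈ C) :
    ∃ w ∈ C, G.Adj v w := by
  obtain ⟨w, hw, hwv⟩ : ∃ w ∈ C, w ≠ v := by
    by_contra! h
    exact hnt ⟨v, Set.eq_singleton_iff_unique_mem.mpr ⟨hv, h⟩⟩
  obtain ⟨p⟩ := hC.reachable hv hw
  cases p with
  | nil => exact absurd rfl hwv
  | cons h _ => exact ⟨_, hC.mem_of_reachable hv h.reachable h.2.2, h.1⟩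

theorem not_adj (hC : G.IsCompOf S C) (hD : G.IsCompOf S D) (hCD : Disjoint C D) (hv : v ∈ C)
    (hw : w ∈ D) : ¬G.Adj v w := fun h =>
  hCD.notMem_of_mem_right hw <|
    hC.mem_of_reachable hv (Adj.reachable ⟨h, hC.notMem_of_mem hv, hD.notMem_of_mem hw⟩)
      (hD.notMem_of_mem hw)

end IsCompOf

theorem IsMinSep.exists_full_comp (hS : G.IsMinSep S) (hC : G.IsCompOf S C) :
    ∃ D, G.IsCompOf S D ∧ Disjoint C D ∧ ∀ s ∈ S, ∃ p ∈ D, G.Adj s p := by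
  obtain ⟨a, b, ha, hb, hab, hmin⟩ := hS
  have hmin' (s) (hs : s ∈ S) : (G.removeVerts (S \ {s})).Reachable a b :=
    hmin _ (Set.sdiff_singleton_ssubset.mpr hs)
  obtain ⟨x, y, hx, hxC, hxy, hmin'⟩ : ∃ x y, x ∉ S ∧ x ∉ C ∧
      ¬(G.removeVerts S).Reachable x y ∧ ∀ s ∈ S, (G.removeVerts (S \ {s})).Reachable x y := by
    by_cases haC : a ∈ C
    · exact ⟨b, a, hb, fun hbC => hab (hC.reachable haC hbC), fun h => hab h.symm,
        fun s hs => (hmin' s hs).symm⟩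
    · exact ⟨a, b, ha, haC, hab, hmin'⟩
  refine ⟨{v | (G.removeVerts S).Reachable x v ∧ v ∉ S}, ⟨x, hx, rfl⟩,
    Set.disjoint_left.mpr fun v hvC hvD => hxC (hC.mem_of_reachable hvC hvD.1.symm hx),
    fun s hs => ?_⟩
  rcases reachable_or_exists_adj hx (hmin' s hs) with h | ⟨p, hsp, hp, hxp⟩
  · exact absurd h hxy
  · exact ⟨p, ⟨hxp, hp⟩, hsp⟩

section FullComp

variable (h2 : G.TwoK2Free) (h3 : G.CkFree 3) (hC : G.IsCompOf S C) (hD : G.IsCompOf S D)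
  (hCD : Disjoint C D) (hfull : ∀ s ∈ S, ∃ p ∈ D, G.Adj s p)
include h2 h3 hC hD hCD hfull

theorem adj_iff_not_adj_of_mem_comp (hs : s ∈ S) (hx : x ∈ C) (hy : y ∈ C) (hxy : G.Adj x y) :
    G.Adj s x ↔ ¬G.Adj s y :=
  let ⟨_, hz, hsz⟩ := hfull s hs
  adj_iff_not_adj_of_adj h2 h3 hsz hxy (hC.not_adj hD hCD hx hz) (hC.not_adj hD hCD hy hz)

theorem false_of_crossing (h5 : G.CkFree 5) (hs₀ : s₀ ∈ S) (hs₁ : s₁ ∈ S) (hx : x ∈ C)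
    (hy : y ∈ C) (hxy : G.Adj x y) (h₀x : G.Adj s₀ x) (h₀y : ¬G.Adj s₀ y)
    (h₁y : G.Adj s₁ y) (h₁x : ¬G.Adj s₁ x) : False := by
  by_cases h₀₁ : G.Adj s₀ s₁
  · obtain ⟨p, hp, h₀p⟩ := hfull s₀ hs₀
    obtain ⟨q, hq, h₁q⟩ := hfull s₁ hs₁
    have hpq : p ≠ q := by rintro rfl; exact h3.not_adj_of_adj_of_adj h₀₁ h₁q h₀p
    have hDnt : ¬∃ u, D = {u} := fun ⟨u, hu⟩ => hpq ((hu ▸ hp).trans (hu ▸ hq).symm)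
    obtain ⟨r, hr, hpr⟩ := hD.exists_adj_mem hDnt hp
    exact hC.not_adj hD hCD hy hr <| h2.adj_of_adj_of_adj hxy hpr
      (hC.not_adj hD hCD hx hp) (hC.not_adj hD hCD hx hr) (hC.not_adj hD hCD hy hp)
  · obtain ⟨z, hz, h₁z⟩ := hfull s₁ hs₁
    have h₀z : G.Adj s₀ z := by
      by_contra h₀z
      exact hC.not_adj hD hCD hx hz <| h2.adj_of_adj_of_adj h₀x h₁z h₀₁ h₀z (fun h => h₁x h.symm)
    exact h5.not_adj_of_induced_path hxy h₁y.symm h₁z h₀z.symm (fun h => h₁x h.symm)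
      (hC.not_adj hD hCD hx hz) (hC.not_adj hD hCD hy hz) (fun h => h₀y h.symm)
      (fun h => h₀₁ h.symm) h₀x

theorem adj_of_adj_of_mem_sep (h5 : G.CkFree 5) (hnt : ¬∃ u, C = {u}) (hs₀ : s₀ ∈ S)
    (hs₁ : s₁ ∈ S) (hv : v ∈ C) (h₀v : G.Adj s₀ v) : G.Adj s₁ v := by
  by_contra h₁v
  obtain ⟨y, hy, hvy⟩ := hC.exists_adj_mem hnt hv
  have h₀y := (adj_iff_not_adj_of_mem_comp h2 h3 hC hD hCD hfull hs₀ hv hy hvy).mp h₀v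
  have h₁y : G.Adj s₁ y := by
    by_contra h₁y
    exact h₁v ((adj_iff_not_adj_of_mem_comp h2 h3 hC hD hCD hfull hs₁ hv hy hvy).mpr h₁y)
  exact false_of_crossing h2 h3 hC hD hCD hfull h5 hs₀ hs₁ hv hy hvy h₀v h₀y h₁y h₁v

end FullComp

end SimpleGraph

theorem stmt8_general [Fintype V] (G : SimpleGraph V) (S C U : Set V)
    (h2k2 : G.TwoK2Free) (hc3 : G.CkFree 3) (hc5 : G.CkFree 5)
    (hS : G.IsMinSep S) (hC : G.IsCompOf S C) (hnt : ¬ ∃ v, C = {v})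
    (hU : U = {v ∈ C | ∀ s ∈ S, G.Adj v s}) :
    ∃ u ∈ U, ∀ w ∈ C \ U, G.Adj u w := by
  obtain ⟨u₀, hu₀⟩ := hC.nonempty
  rcases S.eq_empty_or_nonempty with rfl | ⟨s₀, hs₀⟩
  · exact ⟨u₀, by simp [hU, hu₀], by simp [hU]⟩
  obtain ⟨D, hD, hCD, hfull⟩ := hS.exists_full_comp hC
  have hsplit {x y : V} (hx : x ∈ C) (hy : y ∈ C) (hxy : G.Adj x y) (h₀x : ¬G.Adj s₀ x) :
      G.Adj s₀ y := by
    by_contra h₀y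
    exact h₀x <|
      (SimpleGraph.adj_iff_not_adj_of_mem_comp h2k2 hc3 hC hD hCD hfull hs₀ hx hy hxy).mpr h₀y
  obtain rfl : U = {v ∈ C | G.Adj s₀ v} := hU ▸ Set.ext fun v => and_congr_right fun hv =>
    ⟨fun h => (h s₀ hs₀).symm, fun h s hs =>
      (SimpleGraph.adj_of_adj_of_mem_sep h2k2 hc3 hC hD hCD hfull hc5 hnt hs₀ hs hv h).symm⟩
  have hcover : ∀ w ∈ C \ {v ∈ C | G.Adj s₀ v}, ∃ u ∈ {v ∈ C | G.Adj s₀ v}, G.Adj u w := by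
    rintro w ⟨hw, hw₀⟩
    obtain ⟨u, hu, hwu⟩ := hC.exists_adj_mem hnt hw
    exact ⟨u, ⟨hu, hsplit hw hu hwu fun h => hw₀ ⟨hw, h⟩⟩, hwu.symm⟩
  refine h2k2.exists_forall_adj (Set.toFinite _) ?_ ?_ ?_ hcover
  · by_cases hu₀U : G.Adj s₀ u₀
    · exact ⟨u₀, hu₀, hu₀U⟩
    · obtain ⟨u, hu, -⟩ := hcover u₀ ⟨hu₀, fun h => hu₀U h.2⟩
      exact ⟨u, hu⟩
  · rintro u ⟨-, hu⟩ v ⟨-, hv⟩ - huv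
    exact hc3.not_adj_of_adj_of_adj hu huv hv
  · rintro v ⟨hv, hv₀⟩ w ⟨hw, hw₀⟩ - hvw
    exact hw₀ ⟨hw, hsplit hv hw hvw fun h => hv₀ ⟨hv, h⟩⟩

theorem stmt8 [Fintype V] (G : SimpleGraph V) (S C U : Set V)
    (hconn : G.Connected) (h2k2 : G.TwoK2Free) (hc3 : G.CkFree 3) (hc5 : G.CkFree 5)
    (hS : G.IsMinSep S) (hC : G.IsCompOf S C) (hnt : ¬ ∃ v, C = {v})
    (hU : U = {v ∈ C | ∀ s ∈ S, G.Adj v s}) :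
    ∃ u ∈ U, ∀ w ∈ C \ U, G.Adj u w :=
  stmt8_general G S C U h2k2 hc3 hc5 hS hC hnt hU
end
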